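/- Fix α ∈ (0, 1/2] and set β* = (1 − √(1−2α))/2. Then the function g(β) = f_A(α,β) − h(β) on [α/2, 1/2] attains its maximum at β*: for all β ∈ [α/2, 1/2], f_A(α,β) − h(β) ≤ f_A(α,β*) − h(β*). Moreover g is increasing on [α/2, β*] and decreasing on [β*, 1/2]. -/

import Mathlib

/-- Binary entropy function (base-2 logs), with the convention `0 * log 0 = 0`. -/
noncomputable def binEnt (x : ℝ) : ℝ :=
  -(x * Real.logb 2 x) - (1 - x) * Real.logb 2 (1 - x)

/-- The spectral shape exponent of the accumulator:
`f_A(α,β) = α − h(β) + (1−α)·h((β−α/2)/(1−α))`. -/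
noncomputable def fA (α β : ℝ) : ℝ :=
  α - binEnt β + (1 - α) * binEnt ((β - α / 2) / (1 - α))

/-- The spectral shape exponent of the discrete derivative:
`f_D(α,β) = (1−α)·h(β/(2(1−α))) + α·h(β/(2α)) − h(α)`. -/
noncomputable def fD (α β : ℝ) : ℝ :=
  (1 - α) * binEnt (β / (2 * (1 - α))) + α * binEnt (β / (2 * α)) - binEnt α

/-!
With `g β = f_A(α,β) − h(β)`, one has
`g'(β) · log 2 = log ((1 − α/2 − β) β²) − log ((β − α/2) (1 − β)²)`,
and the difference of the two arguments of `log` factors as `2 (1/2 − β) (β* − β) (1 − β* − β)`,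
because `β*` and `1 − β*` are the roots of `β² − β + α/2`. On `(α/2, 1/2)` only the factor
`β* − β` changes sign, so `g' > 0` below `β*` and `g' < 0` above it.
-/

open Real Set

noncomputable def betaStar (α : ℝ) : ℝ := (1 - √(1 - 2 * α)) / 2

lemma betaStar_le_half (α : ℝ) : betaStar α ≤ 1 / 2 := by
  unfold betaStar
  linarith [sqrt_nonneg (1 - 2 * α)]

lemma div_two_le_betaStar {α : ℝ} (hα : α ≤ 1) : α / 2 ≤ betaStar α := by
  have : √(1 - 2 * α) ≤ 1 - α :=
    sqrt_le_iff.2 ⟨by linarith, by nlinarith [sq_nonneg α]⟩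
  unfold betaStar
  linarith

lemma mul_sq_sub_mul_sq_eq_mul_betaStar {α : ℝ} (hα : α ≤ 1 / 2) (x : ℝ) :
    (1 - α / 2 - x) * x ^ 2 - (x - α / 2) * (1 - x) ^ 2 =
      2 * (1 / 2 - x) * (betaStar α - x) * (1 - betaStar α - x) := by
  have hs : √(1 - 2 * α) ^ 2 = 1 - 2 * α := sq_sqrt (by linarith)
  unfold betaStar
  linear_combination (1 / 2 - x) / 2 * hs

lemma binEnt_eq_binEntropy_div_log_two (x : ℝ) : binEnt x = binEntropy x / log 2 := by
  unfold binEnt binEntropy logb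
  rw [log_inv, log_inv]
  ring

lemma fA_sub_binEnt_eq (α β : ℝ) :
    fA α β - binEnt β =
      α + ((1 - α) * binEntropy ((β - α / 2) / (1 - α)) - 2 * binEntropy β) / log 2 := by
  simp only [fA, binEnt_eq_binEntropy_div_log_two]
  ring

lemma continuous_fA_sub_binEnt (α : ℝ) : Continuous fun β => fA α β - binEnt β := by
  simp only [fA_sub_binEnt_eq]
  fun_prop

lemma hasDerivAt_fA_sub_binEnt {α x : ℝ} (hα : 0 ≤ α) (hx₀ : α / 2 < x)
    (hx₁ : x < 1 - α / 2) :
    HasDerivAt (fun β => fA α β - binEnt β)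
      ((log ((1 - α / 2 - x) * x ^ 2) - log ((x - α / 2) * (1 - x) ^ 2)) / log 2) x := by
  have h1α : 0 < 1 - α := by linarith
  have hu₀ : (x - α / 2) / (1 - α) ≠ 0 := (div_pos (by linarith) h1α).ne'
  have hu₁ : (x - α / 2) / (1 - α) ≠ 1 := by
    rw [Ne, div_eq_one_iff_eq h1α.ne']; linarith
  have hu := (hasDerivAt_binEntropy hu₀ hu₁).comp x
    (((hasDerivAt_id x).sub_const (α / 2)).div_const (1 - α))
  have hx := hasDerivAt_binEntropy (p := x) (by linarith) (by linarith)
  have h1u : 1 - (x - α / 2) / (1 - α) = (1 - α / 2 - x) / (1 - α) := by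
    field_simp; ring
  simp_rw [fA_sub_binEnt_eq]
  refine ((((hu.const_mul (1 - α)).sub (hx.const_mul 2)).div_const (log 2)).const_add α
    ).congr_deriv ?_
  rw [h1u, log_div (by linarith) h1α.ne', log_div (by linarith) h1α.ne',
    log_mul (by linarith) (pow_ne_zero 2 (by linarith)),
    log_mul (by linarith) (pow_ne_zero 2 (by linarith)),
    log_pow, log_pow]
  field_simp
  ring

lemma strictMonoOn_fA_sub_binEnt {α : ℝ} (hα₀ : 0 ≤ α) (hα₁ : α ≤ 1 / 2) :
    StrictMonoOn (fun β => fA α β - binEnt β) (Icc (α / 2) (betaStar α)) := by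
  refine strictMonoOn_of_deriv_pos (convex_Icc _ _) (continuous_fA_sub_binEnt α).continuousOn ?_
  rw [interior_Icc]
  rintro x ⟨hx₀, hx₁⟩
  have hhalf := betaStar_le_half α
  rw [(hasDerivAt_fA_sub_binEnt hα₀ hx₀ (by linarith)).deriv]
  refine div_pos (sub_pos.2 (log_lt_log (mul_pos (by linarith) (pow_pos (by linarith) 2)) ?_))
    (log_pos one_lt_two)
  have hfactor := mul_sq_sub_mul_sq_eq_mul_betaStar hα₁ x
  have : 0 < 2 * (1 / 2 - x) * (betaStar α - x) * (1 - betaStar α - x) := by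
    have : 0 < 1 / 2 - x := by linarith
    have : 0 < betaStar α - x := by linarith
    have : 0 < 1 - betaStar α - x := by linarith
    positivity
  linarith

lemma strictAntiOn_fA_sub_binEnt {α : ℝ} (hα₀ : 0 ≤ α) (hα₁ : α ≤ 1 / 2) :
    StrictAntiOn (fun β => fA α β - binEnt β) (Icc (betaStar α) (1 / 2)) := by
  refine strictAntiOn_of_deriv_neg (convex_Icc _ _) (continuous_fA_sub_binEnt α).continuousOn ?_
  rw [interior_Icc]
  rintro x ⟨hx₀, hx₁⟩
  have hβ := div_two_le_betaStar (hα₁.trans (by norm_num))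
  have hhalf := betaStar_le_half α
  rw [(hasDerivAt_fA_sub_binEnt hα₀ (by linarith) (by linarith)).deriv]
  refine div_neg_of_neg_of_pos
    (sub_neg.2 (log_lt_log (mul_pos (by linarith) (pow_pos (by linarith) 2)) ?_))
    (log_pos one_lt_two)
  have hfactor := mul_sq_sub_mul_sq_eq_mul_betaStar hα₁ x
  have : 0 < 2 * (1 / 2 - x) * (x - betaStar α) * (1 - betaStar α - x) := by
    have : 0 < 1 / 2 - x := by linarith
    have : 0 < x - betaStar α := by linarith
    have : 0 < 1 - betaStar α - x := by linarith
    positivity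
  linarith

/-- For fixed `α ∈ (0, 1/2]` and `β* = (1 − √(1−2α))/2`, the function
`g(β) = f_A(α,β) − h(β)` on `[α/2, 1/2]` attains its maximum at `β*`; moreover it is
increasing on `[α/2, β*]` and decreasing on `[β*, 1/2]`. -/
theorem fA_sub_entropy_max_at_sqrt (α : ℝ) (hα0 : 0 < α) (hα1 : α ≤ 1 / 2) :
    (∀ β : ℝ, α / 2 ≤ β → β ≤ 1 / 2 →
      fA α β - binEnt β ≤
        fA α ((1 - Real.sqrt (1 - 2 * α)) / 2) - binEnt ((1 - Real.sqrt (1 - 2 * α)) / 2)) ∧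
    (∀ β₁ β₂ : ℝ, α / 2 ≤ β₁ → β₁ ≤ β₂ → β₂ ≤ (1 - Real.sqrt (1 - 2 * α)) / 2 →
      fA α β₁ - binEnt β₁ ≤ fA α β₂ - binEnt β₂) ∧
    (∀ β₁ β₂ : ℝ, (1 - Real.sqrt (1 - 2 * α)) / 2 ≤ β₁ → β₁ ≤ β₂ → β₂ ≤ 1 / 2 →
      fA α β₂ - binEnt β₂ ≤ fA α β₁ - binEnt β₁) := by
  have hlow : α / 2 ≤ betaStar α := div_two_le_betaStar (by linarith)
  have hhigh : betaStar α ≤ 1 / 2 := betaStar_le_half α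
  have hmono := (strictMonoOn_fA_sub_binEnt hα0.le hα1).monotoneOn
  have hanti := (strictAntiOn_fA_sub_binEnt hα0.le hα1).antitoneOn
  refine ⟨fun β h₁ h₂ => ?_,
    fun β₁ β₂ h₁ h₁₂ h₂ => hmono ⟨h₁, h₁₂.trans h₂⟩ ⟨h₁.trans h₁₂, h₂⟩ h₁₂,
    fun β₁ β₂ h₁ h₁₂ h₂ => hanti ⟨h₁, h₁₂.trans h₂⟩ ⟨h₁.trans h₁₂, h₂⟩ h₁₂⟩
  rcases le_total β (betaStar α) with h | h
  · exact hmono ⟨h₁, h⟩ ⟨hlow, le_rfl⟩ h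
  · exact hanti ⟨le_rfl, hhigh⟩ ⟨h, h₂⟩ h
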